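/- Let n ≥ 5. If [-,-] is a Lie bracket on μ₀ⁿ making (μ₀ⁿ, ·, [-,-]) a transposed 2-Poisson algebra, and α₁,…,αₙ ∈ ℂ are the coordinates of [e₁,e₂] in the basis e₁,…,eₙ (that is, [e₁,e₂] = Σ_{t=1}^n αₜ eₜ), then [e₁, eᵢ] = (i−1) · Σ_{t=i−1}^n α_{t−i+2} eₜ for all 2 ≤ i ≤ n. -/

import Mathlib

open Finset

/-- The null-filiform associative multiplication on `ℂⁿ = Fin n → ℂ`.
The basis vector `e_i` (1-based) corresponds to the coordinate `i - 1`, and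
`e_i · e_j = e_{i+j}` if `i + j ≤ n`, and `0` otherwise. -/
noncomputable def nfMul (n : ℕ) (x y : Fin n → ℂ) : Fin n → ℂ :=
  fun k => ∑ i : Fin n, ∑ j : Fin n,
    if (i : ℕ) + (j : ℕ) + 1 = (k : ℕ) then x i * y j else 0

/-- The 1-based basis vector `e i` of `ℂⁿ` (zero if `i` is out of range `1,…,n`). -/
noncomputable def nfE (n : ℕ) (i : ℕ) : Fin n → ℂ :=
  fun k => if (k : ℕ) + 1 = i then 1 else 0

/-- The coefficient of the basis vector `e i` (1-based) in `x`. -/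
noncomputable def nfCoeff (n : ℕ) (x : Fin n → ℂ) (i : ℕ) : ℂ :=
  ∑ k : Fin n, if (k : ℕ) + 1 = i then x k else 0

/-- A Lie bracket (bilinear, alternating, satisfying the Jacobi identity)
on a complex vector space. -/
structure LieBracketOn (L : Type*) [AddCommGroup L] [Module ℂ L] where
  br : L → L → L
  add_left : ∀ x y z, br (x + y) z = br x z + br y z
  smul_left : ∀ (c : ℂ) (x y : L), br (c • x) y = c • br x y
  add_right : ∀ x y z, br x (y + z) = br x y + br x z
  smul_right : ∀ (c : ℂ) (x y : L), br x (c • y) = c • br x y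
  alt : ∀ x, br x x = 0
  jacobi : ∀ x y z, br (br x y) z + br (br y z) x + br (br z x) y = 0

/-- `(μ₀ⁿ, ·, [-,-])` is a transposed `δ`-Poisson algebra:
`δ • (z · [x,y]) = [z·x, y] + [x, z·y]`. -/
noncomputable def IsTransposedPoisson (n : ℕ) (δ : ℂ) (B : LieBracketOn (Fin n → ℂ)) : Prop :=
  ∀ x y z, δ • nfMul n z (B.br x y) = B.br (nfMul n z x) y + B.br x (nfMul n z y)

/-- `(μ₀ⁿ, ·, [-,-])` is a `δ`-Poisson algebra:
`[x, y·z] = δ • ([x,y]·z + y·[x,z])`. -/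
noncomputable def IsDeltaPoisson (n : ℕ) (δ : ℂ) (B : LieBracketOn (Fin n → ℂ)) : Prop :=
  ∀ x y z, B.br x (nfMul n y z) = δ • (nfMul n (B.br x y) z + nfMul n y (B.br x z))

/-- The bracket of the transposed 0-Poisson algebra `TP₀(α₁,…,αₙ)` on `μ₀ⁿ`:
determined by `[e₁,e₂] = ∑_{t=1}^n αₜ eₜ` and `[eᵢ,eⱼ] = 0` for all other
pairs `i < j`. -/
noncomputable def brTP0 (n : ℕ) (α : ℕ → ℂ) (x y : Fin n → ℂ) : Fin n → ℂ :=
  (nfCoeff n x 1 * nfCoeff n y 2 - nfCoeff n x 2 * nfCoeff n y 1) •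
    ∑ t ∈ Finset.Icc 1 n, α t • nfE n t

/-- The bracket of the transposed 1-Poisson algebra `TP₁(α₂,…,αₙ)` on `μ₀ⁿ`:
determined by `[e₁,eᵢ] = ∑_{t=i}^n α_{t-i+2} eₜ` for `2 ≤ i ≤ n` and
`[eᵢ,eⱼ] = 0` for `2 ≤ i < j ≤ n`. -/
noncomputable def brTP1 (n : ℕ) (α : ℕ → ℂ) (x y : Fin n → ℂ) : Fin n → ℂ :=
  ∑ i ∈ Finset.Icc 2 n,
    (nfCoeff n x 1 * nfCoeff n y i - nfCoeff n x i * nfCoeff n y 1) •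
      ∑ t ∈ Finset.Icc i n, α (t + 2 - i) • nfE n t

/-- The bracket of the transposed `δ`-Poisson algebra `TP_δ(a, b, c)`
(`a = α_{n-2}`, `b = α_{n-1}`, `c = αₙ`) on `μ₀ⁿ`: determined by
`[e₁,e₂] = a e_{n-2} + b e_{n-1} + c eₙ`, `[e₁,e₃] = δ(a e_{n-1} + b eₙ)`,
`[e₂,e₃] = ((δ²-δ)/2) a eₙ`, `[e₁,e₄] = ((δ²+δ)/2) a eₙ`, and `[eᵢ,eⱼ] = 0`
for all other pairs `i < j`. -/
noncomputable def brTPd (n : ℕ) (δ a b c : ℂ) (x y : Fin n → ℂ) : Fin n → ℂ :=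
  (nfCoeff n x 1 * nfCoeff n y 2 - nfCoeff n x 2 * nfCoeff n y 1) •
      (a • nfE n (n-2) + b • nfE n (n-1) + c • nfE n n)
  + (nfCoeff n x 1 * nfCoeff n y 3 - nfCoeff n x 3 * nfCoeff n y 1) •
      (δ • (a • nfE n (n-1) + b • nfE n n))
  + (nfCoeff n x 2 * nfCoeff n y 3 - nfCoeff n x 3 * nfCoeff n y 2) •
      (((δ^2 - δ)/2 * a) • nfE n n)
  + (nfCoeff n x 1 * nfCoeff n y 4 - nfCoeff n x 4 * nfCoeff n y 1) •
      (((δ^2 + δ)/2 * a) • nfE n n)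

/-- Two bracket structures on `μ₀ⁿ` are isomorphic (as transposed δ-Poisson
algebras): there is a linear bijection preserving both `·` and `[-,-]`. -/
noncomputable def TPIso (n : ℕ) (B B' : (Fin n → ℂ) → (Fin n → ℂ) → (Fin n → ℂ)) : Prop :=
  ∃ φ : (Fin n → ℂ) ≃ₗ[ℂ] (Fin n → ℂ),
    (∀ x y, φ (nfMul n x y) = nfMul n (φ x) (φ y)) ∧
    ∀ x y, φ (B x y) = B' (φ x) (φ y)

section Aux

lemma nfMul_zero_right (n : ℕ) (z : Fin n → ℂ) : nfMul n z 0 = 0 := by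
  funext k; simp [nfMul]

lemma nfMul_add_right (n : ℕ) (z x y : Fin n → ℂ) :
    nfMul n z (x + y) = nfMul n z x + nfMul n z y := by
  funext k
  simp only [nfMul, Pi.add_apply, ← Finset.sum_add_distrib]
  refine Finset.sum_congr rfl fun i _ => ?_
  refine Finset.sum_congr rfl fun j _ => ?_
  split_ifs <;> ring

lemma nfMul_smul_right (n : ℕ) (c : ℂ) (z x : Fin n → ℂ) :
    nfMul n z (c • x) = c • nfMul n z x := by
  funext k
  simp only [nfMul, Pi.smul_apply, smul_eq_mul, Finset.mul_sum]
  refine Finset.sum_congr rfl fun i _ => ?_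
  refine Finset.sum_congr rfl fun j _ => ?_
  split_ifs <;> ring

lemma nfMul_sum_right {ι : Type*} (n : ℕ) (z : Fin n → ℂ) (s : Finset ι)
    (f : ι → Fin n → ℂ) :
    nfMul n z (∑ t ∈ s, f t) = ∑ t ∈ s, nfMul n z (f t) := by
  classical
  induction s using Finset.induction_on with
  | empty => simp [nfMul_zero_right]
  | insert _ _ h ih => rw [Finset.sum_insert h, nfMul_add_right, ih, Finset.sum_insert h]

lemma nfE_eq_zero (n i : ℕ) (hi : n < i) : nfE n i = 0 := by
  funext k
  have hk := k.isLt
  simp only [nfE, Pi.zero_apply]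
  rw [if_neg (by omega)]

lemma sum_ind (n a : ℕ) :
    (∑ i : Fin n, if (i : ℕ) + 1 = a then (1:ℂ) else 0)
      = if 1 ≤ a ∧ a ≤ n then 1 else 0 := by
  by_cases h : 1 ≤ a ∧ a ≤ n
  · rw [if_pos h, Finset.sum_eq_single (⟨a - 1, by omega⟩ : Fin n)]
    · rw [if_pos (by simp; omega)]
    · intro j _ hj
      rw [if_neg]
      intro hc
      exact hj (Fin.ext (by simp; omega))
    · intro hi; exact absurd (Finset.mem_univ _) hi
  · rw [if_neg h]
    refine Finset.sum_eq_zero fun i _ => ?_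
    have := i.isLt
    rw [if_neg (by omega)]

lemma nfE_mul (n a b : ℕ) (ha : 1 ≤ a) (hb : 1 ≤ b) :
    nfMul n (nfE n a) (nfE n b) = nfE n (a + b) := by
  funext k
  have hk := k.isLt
  simp only [nfMul, nfE]
  have key : ∀ i j : Fin n,
      (if (i : ℕ) + (j : ℕ) + 1 = (k : ℕ)
        then (if (i : ℕ) + 1 = a then (1:ℂ) else 0) *
             (if (j : ℕ) + 1 = b then (1:ℂ) else 0)
        else 0)
      = (if (i : ℕ) + 1 = a then (1:ℂ) else 0) *
          ((if (j : ℕ) + 1 = b then (1:ℂ) else 0) *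
            (if (k : ℕ) + 1 = a + b then (1:ℂ) else 0)) := by
    intro i j
    split_ifs <;> (first | ring1 | (exfalso; omega))
  simp only [key]
  have h1 : ∀ i : Fin n,
      (∑ j : Fin n, (if (i : ℕ) + 1 = a then (1:ℂ) else 0) *
          ((if (j : ℕ) + 1 = b then (1:ℂ) else 0) *
            (if (k : ℕ) + 1 = a + b then (1:ℂ) else 0)))
      = (if (i : ℕ) + 1 = a then (1:ℂ) else 0) *
          ((∑ j : Fin n, if (j : ℕ) + 1 = b then (1:ℂ) else 0) *
            (if (k : ℕ) + 1 = a + b then (1:ℂ) else 0)) := by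
    intro i
    rw [← Finset.mul_sum, ← Finset.sum_mul]
  simp only [h1]
  rw [← Finset.sum_mul, sum_ind, sum_ind]
  split_ifs <;> (first | ring1 | (exfalso; omega))

noncomputable def wv (n : ℕ) (α : ℕ → ℂ) (k : ℕ) : Fin n → ℂ :=
  ∑ t ∈ Finset.Icc (k + 1) n, α (t - k) • nfE n t

lemma nfMul_nfE_wv (n : ℕ) (α : ℕ → ℂ) (a k : ℕ) (ha : 1 ≤ a) :
    nfMul n (nfE n a) (wv n α k) = wv n α (k + a) := by
  rw [wv, nfMul_sum_right]
  have h1 : (∑ t ∈ Finset.Icc (k + 1) n, nfMul n (nfE n a) (α (t - k) • nfE n t))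
      = ∑ t ∈ Finset.Icc (k + 1) n,
          (fun s => α (s - (k + a)) • nfE n s) (t + a) := by
    refine Finset.sum_congr rfl fun t ht => ?_
    rw [Finset.mem_Icc] at ht
    rw [nfMul_smul_right, nfE_mul n a t ha (by omega)]
    show α (t - k) • nfE n (a + t) = α (t + a - (k + a)) • nfE n (t + a)
    rw [show t + a - (k + a) = t - k by omega, Nat.add_comm a t]
  have h3 := Finset.sum_map (Finset.Icc (k + 1) n) (addRightEmbedding a)
      (fun s => α (s - (k + a)) • nfE n s)
  simp only [addRightEmbedding_apply] at h3
  rw [h1, ← h3, Finset.map_add_right_Icc, wv]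
  refine (Finset.sum_subset (fun s hs => ?_) (fun s hs hns => ?_)).symm
  · rw [Finset.mem_Icc] at *; omega
  · rw [Finset.mem_Icc] at hs
    simp only [Finset.mem_Icc, not_and, not_le] at hns
    rw [nfE_eq_zero n s (by omega), smul_zero]

lemma br_antisymm {L : Type*} [AddCommGroup L] [Module ℂ L]
    (B : LieBracketOn L) (x y : L) : B.br x y = - B.br y x := by
  have h := B.alt (x + y)
  rw [B.add_left, B.add_right, B.add_right, B.alt, B.alt, zero_add, add_zero] at h
  exact eq_neg_of_add_eq_zero_left h

end Aux

/-- for `n ≥ 5`, in any transposed `2`-Poisson structure on `μ₀ⁿ`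
with `[e₁,e₂] = ∑_{t=1}^n αₜ eₜ`, one has
`[e₁,eᵢ] = (i-1) ∑_{t=i-1}^n α_{t-i+2} eₜ` for `2 ≤ i ≤ n`. -/
theorem stmt_4 (n : ℕ) (hn : 5 ≤ n)
    (B : LieBracketOn (Fin n → ℂ)) (hB : IsTransposedPoisson n 2 B)
    (α : ℕ → ℂ)
    (hα : B.br (nfE n 1) (nfE n 2) = ∑ t ∈ Finset.Icc 1 n, α t • nfE n t) :
    ∀ i, 2 ≤ i → i ≤ n →
      B.br (nfE n 1) (nfE n i) =
        ((i : ℂ) - 1) • ∑ t ∈ Finset.Icc (i - 1) n, α (t + 2 - i) • nfE n t := by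
  have hw0 : B.br (nfE n 1) (nfE n 2) = wv n α 0 := by
    rw [hα, wv]
    norm_num
  have key : ∀ j, 2 ≤ j → (j ≤ n →
      B.br (nfE n 1) (nfE n j) = ((j : ℂ) - 1) • wv n α (j - 2)) := by
    intro j hj
    induction j, hj using Nat.le_induction with
    | base =>
      intro _
      rw [hw0, show ((2:ℕ) : ℂ) - 1 = 1 by norm_num, one_smul]
    | succ j hj ih =>
      intro hjn
      have ihj := ih (by omega)
      have hA := hB (nfE n 1) (nfE n j) (nfE n 1)
      rw [nfE_mul n 1 1 le_rfl le_rfl, nfE_mul n 1 j le_rfl (by omega),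
        show 1 + j = j + 1 by omega] at hA
      have hBid := hB (nfE n 1) (nfE n 2) (nfE n (j - 1))
      rw [nfE_mul n (j - 1) 1 (by omega) le_rfl,
        nfE_mul n (j - 1) 2 (by omega) (by norm_num),
        show j - 1 + 1 = j by omega, show j - 1 + 2 = j + 1 by omega] at hBid
      have h2 : (2:ℂ) • (nfMul n (nfE n 1) (B.br (nfE n 1) (nfE n j)) +
            nfMul n (nfE n (j - 1)) (B.br (nfE n 1) (nfE n 2)))
          = (2:ℂ) • B.br (nfE n 1) (nfE n (j + 1)) := by
        rw [smul_add, hA, hBid, br_antisymm B (nfE n 2) (nfE n j), two_smul]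
        abel
      have hmain := smul_right_injective (Fin n → ℂ) (two_ne_zero' ℂ) h2
      rw [← hmain, ihj, hw0, nfMul_smul_right,
        nfMul_nfE_wv n α 1 (j - 2) le_rfl, nfMul_nfE_wv n α (j - 1) 0 (by omega),
        show j - 2 + 1 = j - 1 by omega, show 0 + (j - 1) = j - 1 by omega,
        show j + 1 - 2 = j - 1 by omega]
      push_cast
      rw [show ((j:ℂ) + 1) - 1 = (j:ℂ) by ring, sub_smul, one_smul, sub_add_cancel]
  intro i hi2 hin
  rw [key i hi2 hin]
  congr 1
  rw [wv, show i - 2 + 1 = i - 1 by omega]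
  refine Finset.sum_congr rfl fun t ht => ?_
  rw [show t - (i - 2) = t + 2 - i by omega]
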